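/- arXiv:1602.03611 — 2 statements merged into one kernel-verified Lean document; each statement's English description precedes it below -/
import Mathlib

section
/- For real q > 1 and real u with u^2 < q, the generating function identity holds: ∑_{n≥0} u^n q^{n(n-1)/2} ∑_{r=0}^{⌊n/2⌋} 1/(q^{r(2n-3r)} |GL(r,q)| |GL(n-2r,q)|) = ∏_{i≥1}(1 + u/q^i) / ∏_{i≥1}(1 - u^2/q^i). -/
/-!
Put `t = q⁻¹`. For `n = m + 2r` the summand of index `(n, r)` factors as
`a_m u^m · b_r (u²t)^r` with `a_m = t^{m(m+1)/2} / (t;t)_m` and `b_r = 1 / (t;t)_r`, so the sum is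
the product `A(u) · B(u²t)` of the series `A(x) = ∑ a_m x^m` and `B(y) = ∑ b_r y^r`. These are
Euler's two `q`-exponential series: the coefficient recurrences give the functional equations
`A(x) = (1 + xt) A(xt)` and `(1 - y) B(y) = B(yt)`, and iterating them while `A(xt^N)` and
`B(yt^N)` tend to `1` (dominated convergence) yields `A(x) = ∏ (1 + x t^{i+1})` and
`B(y)⁻¹ = ∏ (1 - y t^i)`.
-/

/-- `|GL(j,q)| = q^{j²} ∏_{k=1}^j (1 - q^{-k})`, extended to a real parameter `q`. -/
noncomputable def glOrder (q : ℝ) (j : ℕ) : ℝ :=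
  q ^ (j ^ 2) * ∏ k ∈ Finset.range j, (1 - q⁻¹ ^ (k + 1))

open Finset Filter Topology

lemma summable_norm_of_norm_succ_le {E : Type*} [SeminormedAddCommGroup E] {f : ℕ → E}
    {ρ : ℕ → ℝ} {l : ℝ} (hρ : Tendsto ρ atTop (𝓝 l)) (hl : l < 1)
    (h : ∀ n, ‖f (n + 1)‖ ≤ ρ n * ‖f n‖) : Summable fun n => ‖f n‖ := by
  refine summable_of_ratio_norm_eventually_le (r := (1 + l) / 2) (by linarith) ?_
  filter_upwards [hρ.eventually (eventually_le_nhds (by linarith : l < (1 + l) / 2))] with n hn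
  simpa only [norm_norm] using (h n).trans (mul_le_mul_of_nonneg_right hn (norm_nonneg _))

lemma eq_tprod_mul_of_eq_mul_succ {M : Type*} [CommMonoid M] [TopologicalSpace M]
    [ContinuousMul M] [T2Space M] {g φ : ℕ → M} {L : M} (h : ∀ n, g n = φ n * g (n + 1))
    (hg : Tendsto g atTop (𝓝 L)) (hφ : Multipliable φ) : g 0 = (∏' n, φ n) * L := by
  have hpartial : ∀ N, g 0 = (∏ i ∈ range N, φ i) * g N := by
    intro N
    induction N with
    | zero => simp
    | succ N ih => rw [ih, h N, prod_range_succ, mul_assoc]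
  refine tendsto_nhds_unique (f := fun _ : ℕ => g 0) (l := atTop) tendsto_const_nhds ?_
  simpa only [← hpartial] using hφ.hasProd.tendsto_prod_nat.mul hg

theorem tsum_mul_tsum_eq_tsum_sum_range_half_of_summable_norm {R : Type*} [NormedRing R]
    [CompleteSpace R] {f g : ℕ → R} (hf : Summable fun m => ‖f m‖)
    (hg : Summable fun r => ‖g r‖) :
    (∑' m, f m) * ∑' r, g r = ∑' n, ∑ r ∈ range (n / 2 + 1), f (n - 2 * r) * g r := by
  classical
  set F : ℕ × ℕ → R := fun p => if 2 * p.2 ≤ p.1 then f (p.1 - 2 * p.2) * g p.2 else 0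
  set e : ℕ × ℕ → ℕ × ℕ := fun p => (p.1 + 2 * p.2, p.2)
  have he : Function.Injective e := fun p p' hpp' => by
    simp only [e, Prod.mk.injEq] at hpp'
    exact Prod.ext (by omega) hpp'.2
  have hFe : F ∘ e = fun p => f p.1 * g p.2 := by
    funext p
    simp [F, e]
  have hsupp : ∀ p ∉ Set.range e, F p = 0 := fun p hp => by
    refine if_neg fun h2 => hp ⟨(p.1 - 2 * p.2, p.2), ?_⟩
    exact Prod.ext (by simp only [e]; omega) rfl
  have hF : Summable F := by
    rw [← he.summable_iff hsupp, hFe]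
    exact summable_mul_of_summable_norm hf hg
  have hfiber : ∀ n, ∑' r, F (n, r) = ∑ r ∈ range (n / 2 + 1), f (n - 2 * r) * g r := by
    intro n
    rw [tsum_eq_sum (s := range (n / 2 + 1)) fun r hr => if_neg (by simp at hr; omega)]
    exact sum_congr rfl fun r hr => if_pos (by simp at hr; omega)
  calc (∑' m, f m) * ∑' r, g r = ∑' p : ℕ × ℕ, f p.1 * g p.2 :=
        tsum_mul_tsum_of_summable_norm hf hg
    _ = ∑' p, F p := by
        rw [← hFe, ← he.tsum_eq fun p hp => by_contra fun h => hp (hsupp p h)]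
        rfl
    _ = _ := by rw [hF.tsum_prod]; exact tsum_congr hfiber

section QSeries

variable {t : ℝ} {c κ : ℕ → ℝ}

lemma one_sub_pow_succ_pos (ht : |t| < 1) (k : ℕ) : 0 < 1 - t ^ (k + 1) := by
  have : |t ^ (k + 1)| < 1 := by rw [abs_pow]; exact pow_lt_one₀ (abs_nonneg t) ht k.succ_ne_zero
  linarith [le_abs_self (t ^ (k + 1))]

lemma summable_norm_mul_pow_of_mul_one_sub_pow (ht : |t| < 1)
    (hc : ∀ m, c (m + 1) * (1 - t ^ (m + 1)) = κ m * c m) {l x : ℝ}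
    (hκ : Tendsto κ atTop (𝓝 l)) (hx : |l| * |x| < 1) :
    Summable fun m => ‖c m * x ^ m‖ := by
  have hρ : Tendsto (fun m => |κ m| * |x| / (1 - t ^ (m + 1))) atTop (𝓝 (|l| * |x|)) := by
    have hpow := ((tendsto_pow_atTop_nhds_zero_of_abs_lt_one ht).comp
      (tendsto_add_atTop_nat 1)).const_sub 1
    have := (hκ.abs.mul_const |x|).div hpow (by simp)
    rwa [sub_zero, div_one] at this
  refine (summable_norm_of_norm_succ_le hρ hx fun m => le_of_eq ?_).of_norm
  have hpos := one_sub_pow_succ_pos ht m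
  rw [eq_div_of_mul_eq hpos.ne' (hc m)]
  simp only [Real.norm_eq_abs, abs_mul, abs_div, abs_pow, abs_abs, abs_of_pos hpos]
  ring

lemma tsum_mul_pow_sub_tsum_mul_mul_pow (hc : ∀ m, c (m + 1) * (1 - t ^ (m + 1)) = κ m * c m)
    {x : ℝ} (hx : Summable fun m => c m * x ^ m)
    (hxt : Summable fun m => c m * (x * t) ^ m) :
    ∑' m, c m * x ^ m - ∑' m, c m * (x * t) ^ m = x * ∑' m, κ m * c m * x ^ m := by
  rw [← hx.tsum_sub hxt, (hx.sub hxt).tsum_eq_zero_add, ← tsum_mul_left]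
  simp only [pow_zero, sub_self, zero_add]
  refine tsum_congr fun m => ?_
  rw [← hc]
  ring

lemma tendsto_tsum_mul_pow_mul_pow (ht : |t| < 1) {x : ℝ}
    (hx : Summable fun m => ‖c m * x ^ m‖) :
    Tendsto (fun N : ℕ => ∑' m, c m * (x * t ^ N) ^ m) atTop (𝓝 (c 0)) := by
  have hlim : ∀ m, Tendsto (fun N : ℕ => c m * (x * t ^ N) ^ m) atTop (𝓝 (c m * (x * 0) ^ m)) :=
    fun m => (((tendsto_pow_atTop_nhds_zero_of_abs_lt_one ht).const_mul x).pow m).const_mul _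
  have hbound : ∀ᶠ N : ℕ in atTop, ∀ m, ‖c m * (x * t ^ N) ^ m‖ ≤ ‖c m * x ^ m‖ := by
    refine Eventually.of_forall fun N m => ?_
    simp only [norm_mul, norm_pow]
    gcongr
    exact mul_le_of_le_one_right (norm_nonneg _)
      (by simpa using pow_le_one₀ (abs_nonneg t) ht.le)
  simpa [zero_pow_eq, tsum_ite_eq] using tendsto_tsum_of_dominated_convergence hx hlim hbound

lemma multipliable_one_add_mul_pow (ht : |t| < 1) (x : ℝ) :
    Multipliable fun i : ℕ => 1 + x * t ^ i :=
  Real.multipliable_one_add_of_summable ((summable_geometric_of_abs_lt_one ht).mul_left x)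

end QSeries

noncomputable def qPochhammer (t : ℝ) (m : ℕ) : ℝ := ∏ k ∈ range m, (1 - t ^ (k + 1))

noncomputable def eulerCoeff (t : ℝ) (m : ℕ) : ℝ := t ^ (m + 1).choose 2 / qPochhammer t m

section Euler

variable {t : ℝ}

lemma qPochhammer_succ (m : ℕ) : qPochhammer t (m + 1) = qPochhammer t m * (1 - t ^ (m + 1)) :=
  prod_range_succ _ _

lemma qPochhammer_pos (ht : |t| < 1) (m : ℕ) : 0 < qPochhammer t m :=
  prod_pos fun k _ => one_sub_pow_succ_pos ht k

lemma eulerCoeff_succ_mul (ht : |t| < 1) (m : ℕ) :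
    eulerCoeff t (m + 1) * (1 - t ^ (m + 1)) = t ^ (m + 1) * eulerCoeff t m := by
  have := (one_sub_pow_succ_pos ht m).ne'
  have := (qPochhammer_pos ht m).ne'
  rw [eulerCoeff, eulerCoeff, qPochhammer_succ, Nat.choose_succ_succ' (m + 1) 1,
    Nat.choose_one_right, pow_add]
  field_simp

lemma inv_qPochhammer_succ_mul (ht : |t| < 1) (m : ℕ) :
    (qPochhammer t (m + 1))⁻¹ * (1 - t ^ (m + 1)) = 1 * (qPochhammer t m)⁻¹ := by
  have := (one_sub_pow_succ_pos ht m).ne'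
  rw [qPochhammer_succ, mul_inv, one_mul, mul_assoc, inv_mul_cancel₀ this, mul_one]

lemma summable_norm_eulerCoeff_mul_pow (ht : |t| < 1) (x : ℝ) :
    Summable fun m => ‖eulerCoeff t m * x ^ m‖ :=
  summable_norm_mul_pow_of_mul_one_sub_pow ht (eulerCoeff_succ_mul ht)
    ((tendsto_pow_atTop_nhds_zero_of_abs_lt_one ht).comp (tendsto_add_atTop_nat 1)) (by simp)

lemma summable_norm_inv_qPochhammer_mul_pow (ht : |t| < 1) {x : ℝ} (hx : |x| < 1) :
    Summable fun m => ‖(qPochhammer t m)⁻¹ * x ^ m‖ :=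
  summable_norm_mul_pow_of_mul_one_sub_pow ht (inv_qPochhammer_succ_mul ht) tendsto_const_nhds
    (by simpa using hx)

theorem tsum_eulerCoeff_mul_pow (ht : |t| < 1) (x : ℝ) :
    ∑' m, eulerCoeff t m * x ^ m = ∏' i : ℕ, (1 + x * t ^ (i + 1)) := by
  set A : ℝ → ℝ := fun y => ∑' m, eulerCoeff t m * y ^ m
  have hfe : ∀ y, A y = (1 + y * t) * A (y * t) := by
    intro y
    have hdiff := tsum_mul_pow_sub_tsum_mul_mul_pow (eulerCoeff_succ_mul ht)
      (summable_norm_eulerCoeff_mul_pow ht y).of_norm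
      (summable_norm_eulerCoeff_mul_pow ht (y * t)).of_norm
    have hshift : ∑' m, t ^ (m + 1) * eulerCoeff t m * y ^ m = t * A (y * t) := by
      rw [← tsum_mul_left]
      exact tsum_congr fun m => by ring
    rw [hshift] at hdiff
    linear_combination hdiff
  have h := eq_tprod_mul_of_eq_mul_succ (g := fun N => A (x * t ^ N))
    (φ := fun i => 1 + x * t ^ (i + 1))
    (fun N => by rw [hfe (x * t ^ N), mul_assoc, ← pow_succ])
    (tendsto_tsum_mul_pow_mul_pow ht (summable_norm_eulerCoeff_mul_pow ht x))
    ((multipliable_one_add_mul_pow ht (x * t)).congr fun i => by ring)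
  simpa [A, eulerCoeff, qPochhammer] using h

theorem inv_tsum_inv_qPochhammer_mul_pow (ht : |t| < 1) {x : ℝ} (hx : |x| < 1) :
    (∑' m, (qPochhammer t m)⁻¹ * x ^ m)⁻¹ = ∏' i : ℕ, (1 - x * t ^ i) := by
  set B : ℝ → ℝ := fun y => ∑' m, (qPochhammer t m)⁻¹ * y ^ m
  have hfe : ∀ y, |y| < 1 → (B y)⁻¹ = (1 - y) * (B (y * t))⁻¹ := by
    intro y hy
    have hdiff := tsum_mul_pow_sub_tsum_mul_mul_pow (inv_qPochhammer_succ_mul ht)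
      (summable_norm_inv_qPochhammer_mul_pow ht hy).of_norm
      (summable_norm_inv_qPochhammer_mul_pow ht (by
        rw [abs_mul]; exact mul_lt_one_of_nonneg_of_lt_one_left (abs_nonneg y) hy ht.le)).of_norm
    simp only [one_mul] at hdiff
    have hy1 : 1 - y ≠ 0 := by linarith [le_abs_self y]
    rw [show B (y * t) = (1 - y) * B y by linear_combination -hdiff, mul_inv,
      ← mul_assoc, mul_inv_cancel₀ hy1, one_mul]
  have hxN : ∀ N, |x * t ^ N| < 1 := fun N => by
    rw [abs_mul, abs_pow]
    exact lt_of_le_of_lt (mul_le_of_le_one_right (abs_nonneg x)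
      (pow_le_one₀ (abs_nonneg t) ht.le)) hx
  have h := eq_tprod_mul_of_eq_mul_succ (g := fun N => (B (x * t ^ N))⁻¹)
    (φ := fun i => 1 - x * t ^ i)
    (fun N => by rw [hfe _ (hxN N), mul_assoc, ← pow_succ])
    ((tendsto_tsum_mul_pow_mul_pow ht (summable_norm_inv_qPochhammer_mul_pow ht hx)).inv₀
      (by simp [qPochhammer]))
    ((multipliable_one_add_mul_pow ht (-x)).congr fun i => by ring)
  simpa [B, qPochhammer] using h

end Euler

lemma glOrder_summand_eq {q : ℝ} (hq : q ≠ 0) (u : ℝ) {n r : ℕ} (hr : 2 * r ≤ n) :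
    u ^ n * q ^ (n * (n - 1) / 2) *
        (1 / (q ^ (r * (2 * n - 3 * r)) * glOrder q r * glOrder q (n - 2 * r))) =
      eulerCoeff q⁻¹ (n - 2 * r) * u ^ (n - 2 * r) *
        ((qPochhammer q⁻¹ r)⁻¹ * (u ^ 2 * q⁻¹) ^ r) := by
  obtain ⟨m, rfl⟩ : ∃ m, n = m + 2 * r := ⟨n - 2 * r, by omega⟩
  rw [show m + 2 * r - 2 * r = m by omega, show 2 * (m + 2 * r) - 3 * r = 2 * m + r by omega,
    ← Nat.choose_two_right]
  have hexp : (m + 2 * r).choose 2 + ((m + 1).choose 2 + r) = r * (2 * m + r) + r ^ 2 + m ^ 2 := by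
    have : ((m + 2 * r).choose 2 + ((m + 1).choose 2 + r) : ℚ) =
        r * (2 * m + r) + r ^ 2 + m ^ 2 := by
      push_cast [Nat.cast_choose_two]
      ring
    exact_mod_cast this
  have hpow : q ^ (m + 2 * r).choose 2 * (q ^ (m + 1).choose 2 * q ^ r) =
      q ^ (r * (2 * m + r)) * q ^ (r ^ 2) * q ^ (m ^ 2) := by
    simp only [← pow_add, hexp]
  rw [eulerCoeff, glOrder, glOrder, ← qPochhammer, ← qPochhammer, inv_pow, mul_pow, inv_pow]
  generalize qPochhammer q⁻¹ r = Pr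
  generalize qPochhammer q⁻¹ m = Pm
  field_simp
  linear_combination u ^ m * u ^ (2 * r) * Pr⁻¹ * Pm⁻¹ * hpow

/-- Sum = product identity for even characteristic general linear groups:
`∑_{n≥0} u^n q^{n(n-1)/2} ∑_{r=0}^{⌊n/2⌋} 1/(q^{r(2n-3r)} |GL(r,q)| |GL(n-2r,q)|)
  = ∏_{i≥1}(1+u/qⁱ) / ∏_{i≥1}(1-u²/qⁱ)`. -/
theorem sum_eq_product_GL_even (q u : ℝ) (hq : 1 < q) (hu : u ^ 2 < q) :
    ∑' n : ℕ, u ^ n * q ^ (n * (n - 1) / 2) *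
      ∑ r ∈ Finset.range (n / 2 + 1),
        1 / (q ^ (r * (2 * n - 3 * r)) * glOrder q r * glOrder q (n - 2 * r)) =
      (∏' i : ℕ, (1 + u / q ^ (i + 1))) / ∏' i : ℕ, (1 - u ^ 2 / q ^ (i + 1)) := by
  have hq0 : 0 < q := by linarith
  have ht : |q⁻¹| < 1 := by rw [abs_inv, abs_of_pos hq0]; exact inv_lt_one_of_one_lt₀ hq
  have hu2 : |u ^ 2 * q⁻¹| < 1 := by
    rw [abs_of_nonneg (by positivity), ← div_eq_mul_inv, div_lt_one hq0]
    exact hu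
  have hsummand : ∀ n : ℕ, u ^ n * q ^ (n * (n - 1) / 2) *
      ∑ r ∈ range (n / 2 + 1),
        1 / (q ^ (r * (2 * n - 3 * r)) * glOrder q r * glOrder q (n - 2 * r)) =
      ∑ r ∈ range (n / 2 + 1), eulerCoeff q⁻¹ (n - 2 * r) * u ^ (n - 2 * r) *
        ((qPochhammer q⁻¹ r)⁻¹ * (u ^ 2 * q⁻¹) ^ r) := fun n => by
    rw [mul_sum]
    exact sum_congr rfl fun r hr => glOrder_summand_eq hq0.ne' u (by simp at hr; omega)
  rw [tsum_congr hsummand, ← tsum_mul_tsum_eq_tsum_sum_range_half_of_summable_norm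
      (summable_norm_eulerCoeff_mul_pow ht u) (summable_norm_inv_qPochhammer_mul_pow ht hu2),
    tsum_eulerCoeff_mul_pow ht, ← inv_inv (∑' r, _), inv_tsum_inv_qPochhammer_mul_pow ht hu2,
    ← div_eq_mul_inv]
  congr 2 <;> funext i
  · rw [div_eq_mul_inv, inv_pow]
  · rw [div_eq_mul_inv, mul_assoc, ← pow_succ', inv_pow]
end

section
/- For fixed odd prime power q, the limit as n → ∞ of i_Sp(2n,q)/q^{n^2} over even n equals (1/2)[∏_{i≥1}(1 + q^{1-2i})^2 + ∏_{i≥1}(1 − q^{1-2i})^2] = ∏_{i≥1}(1 + q^{4-8i})^2 (1 - q^{-8i})/(1 - q^{-2i}), where i_Sp(2n,q) = ∑_{r=0}^{n} |Sp(2n,q)|/(|Sp(2r,q)| |Sp(2n-2r,q)|). -/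
/-!
With `c = 1/q` one has `|Sp(2m,q)| = q^{m(2m+1)} (c²;c²)_m`, so the `r`-th summand of
`i_Sp(2n,q)/q^{n²}` is the Gaussian binomial `[n, r]_{c²}` times `c^{(2r-n)²}`. For `n = 2m`
the Gaussian binomials `[2m, m+k]_{c²}` tend to `1/(c²;c²)_∞` and are bounded by
`1/(c²;c²)_∞²`, so by dominated convergence the normalized count tends to
`∑_k c^{4k²} / (c²;c²)_∞`.

The same limit, applied to the finite form of the Jacobi triple product (a consequence of the
`q`-binomial theorem), gives `∏ (1 ± c^{2i+1})² = ∑_k (±1)^k c^{k²} / (c²;c²)_∞`. Averaging the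
two signs keeps the even `k`, which is the first closed form; the triple product at `c⁴` gives
`∏ (1 + c^{4(2i+1)})² = ∑_k c^{4k²} / (c⁸;c⁸)_∞`, which is the second.
-/

/-- `|Sp(2m,q)| = q^{m²} ∏_{i=1}^m (q^{2i} - 1)` as a real number. -/
noncomputable def spOrder (q : ℝ) (m : ℕ) : ℝ :=
  q ^ (m ^ 2) * ∏ i ∈ Finset.range m, (q ^ (2 * (i + 1)) - 1)

open Filter Finset Topology

lemma sum_range_two_mul_add_one (N : ℕ) : ∑ j ∈ range N, (2 * j + 1) = N ^ 2 := by
  induction N with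
  | zero => rfl
  | succ N ih => rw [sum_range_succ, ih]; ring

lemma two_mul_choose_two_add_self (r : ℕ) : 2 * r.choose 2 + r = r ^ 2 := by
  induction r with
  | zero => rfl
  | succ r ih => rw [Nat.choose_succ_succ', Nat.choose_one_right]; linear_combination ih

section QAnalogues

variable {R : Type*} [CommRing R]

/-- The `q`-Pochhammer symbol `(t;t)_n`. -/
def qPoch (t : R) (n : ℕ) : R := ∏ i ∈ range n, (1 - t ^ (i + 1))

/-- The Gaussian binomial coefficient `[n, k]_t`, defined by the `q`-Pascal rule. -/
def qBinom (t : R) : ℕ → ℕ → R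
  | _, 0 => 1
  | 0, _ + 1 => 0
  | n + 1, k + 1 => qBinom t n k + t ^ (k + 1) * qBinom t n (k + 1)

@[simp] lemma qPoch_zero (t : R) : qPoch t 0 = 1 := prod_range_zero _

lemma qPoch_succ (t : R) (n : ℕ) : qPoch t (n + 1) = qPoch t n * (1 - t ^ (n + 1)) :=
  prod_range_succ _ _

@[simp] lemma qBinom_zero_right (t : R) (n : ℕ) : qBinom t n 0 = 1 := by cases n <;> rfl

lemma qBinom_succ_succ (t : R) (n k : ℕ) :
    qBinom t (n + 1) (k + 1) = qBinom t n k + t ^ (k + 1) * qBinom t n (k + 1) := rfl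

lemma qBinom_eq_zero_of_lt (t : R) {n k : ℕ} (h : n < k) : qBinom t n k = 0 := by
  induction n generalizing k with
  | zero => obtain ⟨k, rfl⟩ := Nat.exists_eq_add_of_lt h; rfl
  | succ n ih =>
    obtain ⟨k, rfl⟩ := Nat.exists_eq_add_of_lt (Nat.zero_lt_of_lt h)
    rw [qBinom_succ_succ, ih (by omega), ih (by omega), mul_zero, add_zero]

lemma qBinom_mul_qPoch_mul_qPoch (t : R) {n k : ℕ} (h : k ≤ n) :
    qBinom t n k * qPoch t k * qPoch t (n - k) = qPoch t n := by
  induction n generalizing k with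
  | zero => obtain rfl := Nat.le_zero.mp h; simp
  | succ n ih =>
    obtain _ | k := k
    · simp
    have hfirst : qBinom t n k * qPoch t (k + 1) * qPoch t (n - k)
        = qPoch t n * (1 - t ^ (k + 1)) := by
      rw [qPoch_succ]; linear_combination (1 - t ^ (k + 1)) * ih (k := k) (by omega)
    have hsecond : qBinom t n (k + 1) * qPoch t (k + 1) * qPoch t (n - k)
        = qPoch t n * (1 - t ^ (n - k)) := by
      rcases (show k < n ∨ k = n by omega) with hk | rfl
      · obtain ⟨j, hj⟩ : ∃ j, n - k = j + 1 := ⟨n - k - 1, by omega⟩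
        have hrest := ih (k := k + 1) hk
        rw [show n - (k + 1) = j by omega] at hrest
        rw [hj, qPoch_succ t j]; linear_combination (1 - t ^ (j + 1)) * hrest
      · simp [qBinom_eq_zero_of_lt t (Nat.lt_succ_self k)]
    have hpow : t ^ (k + 1) * t ^ (n - k) = t ^ (n + 1) := by
      rw [← pow_add]; congr 1; omega
    rw [qBinom_succ_succ, Nat.add_sub_add_right, qPoch_succ t n]
    linear_combination hfirst + t ^ (k + 1) * hsecond - qPoch t n * hpow

/-- The `q`-binomial theorem (Rothe). -/
lemma prod_one_add_mul_pow (t x : R) (n : ℕ) :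
    ∏ i ∈ range n, (1 + x * t ^ i)
      = ∑ k ∈ range (n + 1), qBinom t n k * t ^ k.choose 2 * x ^ k := by
  induction n generalizing x with
  | zero => simp
  | succ n ih =>
    have hprod :
        ∏ i ∈ range n, (1 + x * t ^ (i + 1)) = ∏ i ∈ range n, (1 + x * t * t ^ i) :=
      prod_congr rfl fun i _ => by ring
    have hshift := sum_range_succ' (fun k => qBinom t n k * t ^ k.choose 2 * (x * t) ^ k) (n + 1)
    rw [sum_range_succ, qBinom_eq_zero_of_lt t (Nat.lt_succ_self n)] at hshift
    have hterm : ∀ k, qBinom t (n + 1) (k + 1) * t ^ (k + 1).choose 2 * x ^ (k + 1)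
        = x * (qBinom t n k * t ^ k.choose 2 * (x * t) ^ k)
          + qBinom t n (k + 1) * t ^ (k + 1).choose 2 * (x * t) ^ (k + 1) := by
      intro k
      rw [qBinom_succ_succ, Nat.choose_succ_succ', Nat.choose_one_right]
      ring
    rw [prod_range_succ', hprod, ih, sum_range_succ' _ (n + 1), sum_congr rfl fun k _ => hterm k,
      sum_add_distrib, ← mul_sum]
    simp only [zero_mul, add_zero, qBinom_zero_right, Nat.choose_zero_succ, pow_zero,
      mul_one] at hshift ⊢
    linear_combination hshift

lemma qBinom_nonneg {R : Type*} [CommRing R] [PartialOrder R] [IsOrderedRing R] {t : R}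
    (ht : 0 ≤ t) (n k : ℕ) : 0 ≤ qBinom t n k := by
  induction n generalizing k with
  | zero => cases k <;> simp [qBinom]
  | succ n ih =>
    cases k with
    | zero => simp [qBinom]
    | succ k => exact add_nonneg (ih k) (mul_nonneg (pow_nonneg ht _) (ih (k + 1)))

end QAnalogues

lemma prod_two_mul_one_add_eq_jacobi_prod {K : Type*} [Field K] {c x : K} (hc : c ≠ 0)
    (hx : x ≠ 0) (N : ℕ) :
    ∏ i ∈ range (2 * N), (1 + x * c ^ (1 - 2 * (N : ℤ)) * (c ^ 2) ^ i)
      = x ^ N * (c ^ (N ^ 2))⁻¹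
        * ∏ j ∈ range N, ((1 + x * c ^ (2 * j + 1)) * (1 + x⁻¹ * c ^ (2 * j + 1))) := by
  have hlow : ∀ j ∈ range N, 1 + x * c ^ (1 - 2 * (N : ℤ)) * (c ^ 2) ^ (N - 1 - j)
      = x * (c ^ (2 * j + 1))⁻¹ * (1 + x⁻¹ * c ^ (2 * j + 1)) := by
    intro j hj
    have : c ^ (1 - 2 * (N : ℤ)) * (c ^ 2) ^ (N - 1 - j) = (c ^ (2 * j + 1))⁻¹ := by
      rw [← pow_mul, ← zpow_natCast, ← zpow_natCast, ← zpow_add₀ hc, ← zpow_neg]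
      have := mem_range.mp hj
      congr 1; push_cast; omega
    rw [mul_assoc, this]; field_simp; ring
  have hhigh : ∀ j ∈ range N, 1 + x * c ^ (1 - 2 * (N : ℤ)) * (c ^ 2) ^ (N + j)
      = 1 + x * c ^ (2 * j + 1) := by
    intro j _
    rw [mul_assoc, ← pow_mul, ← zpow_natCast, ← zpow_natCast, ← zpow_add₀ hc]
    congr 3; push_cast; ring
  rw [two_mul, prod_range_add,
    ← prod_range_reflect (fun i => 1 + x * c ^ (1 - 2 * (N : ℤ)) * (c ^ 2) ^ i) N,
    prod_congr rfl hlow, prod_congr rfl hhigh]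
  simp only [prod_mul_distrib, prod_const, card_range, prod_inv_distrib, prod_pow_eq_pow_sum,
    sum_range_two_mul_add_one]
  ring

lemma finite_jacobi_triple_product {K : Type*} [Field K] {c x : K} (hc : c ≠ 0) (hx : x ≠ 0)
    (N : ℕ) :
    ∏ j ∈ range N, ((1 + x * c ^ (2 * j + 1)) * (1 + x⁻¹ * c ^ (2 * j + 1)))
      = ∑ r ∈ range (2 * N + 1),
          qBinom (c ^ 2) (2 * N) r * (x ^ ((r : ℤ) - N) * c ^ (((r : ℤ) - N) ^ 2)) := by
  rw [← mul_right_inj' (show x ^ N * (c ^ (N ^ 2))⁻¹ ≠ 0 by simp [hx, hc]),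
    ← prod_two_mul_one_add_eq_jacobi_prod hc hx, prod_one_add_mul_pow, mul_sum]
  refine sum_congr rfl fun r _ => ?_
  have hexp : c ^ (((r : ℤ) - N) ^ 2)
      = c ^ (2 * r.choose 2) * c ^ ((1 - 2 * (N : ℤ)) * r) * c ^ (N ^ 2) := by
    have := congrArg (Nat.cast : ℕ → ℤ) (two_mul_choose_two_add_self r)
    push_cast at this
    rw [← zpow_natCast, ← zpow_natCast, ← zpow_add₀ hc, ← zpow_add₀ hc]
    congr 1; push_cast; linear_combination -this
  rw [zpow_sub₀ hx, zpow_natCast, zpow_natCast, hexp, mul_pow, ← zpow_natCast (c ^ _ : K) r,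
    ← zpow_mul, ← pow_mul]
  field_simp

/-- `(t;t)_∞`. -/
noncomputable def qPochInf (t : ℝ) : ℝ := ∏' i : ℕ, (1 - t ^ (i + 1))

section QPochhammer

variable {t : ℝ}

lemma summable_norm_neg_pow_succ (ht : |t| < 1) : Summable fun i : ℕ => ‖-t ^ (i + 1)‖ := by
  simpa [abs_pow] using
    (summable_nat_add_iff 1).mpr (summable_geometric_of_lt_one (abs_nonneg t) ht)

lemma hasProd_qPochInf (ht : |t| < 1) : HasProd (fun i : ℕ => 1 - t ^ (i + 1)) (qPochInf t) := by
  simpa [qPochInf, ← sub_eq_add_neg] using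
    (multipliable_one_add_of_summable (summable_norm_neg_pow_succ ht)).hasProd

lemma tendsto_qPoch_qPochInf (ht : |t| < 1) : Tendsto (qPoch t) atTop (𝓝 (qPochInf t)) :=
  (hasProd_qPochInf ht).tendsto_prod_nat

lemma qPochInf_ne_zero (ht : |t| < 1) : qPochInf t ≠ 0 := by
  have hfactor (i : ℕ) : 1 + -t ^ (i + 1) ≠ 0 := by
    rw [← sub_eq_add_neg, sub_ne_zero, ne_comm]
    exact fun h =>
      (pow_lt_one₀ (abs_nonneg t) ht i.succ_ne_zero).ne (by rw [← abs_pow, h, abs_one])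
  simpa [qPochInf, ← sub_eq_add_neg] using
    tprod_one_add_ne_zero_of_summable hfactor (summable_norm_neg_pow_succ ht)

variable (ht₀ : 0 ≤ t) (ht₁ : t < 1)
include ht₀ ht₁

lemma qPoch_pos (n : ℕ) : 0 < qPoch t n :=
  prod_pos fun i _ ↦ sub_pos.mpr (pow_lt_one₀ ht₀ ht₁ i.succ_ne_zero)

lemma qPoch_le_one (n : ℕ) : qPoch t n ≤ 1 :=
  prod_le_one (fun _ _ => sub_nonneg.mpr (pow_le_one₀ ht₀ ht₁.le))
    fun _ _ => sub_le_self _ (pow_nonneg ht₀ _)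

lemma qPoch_antitone : Antitone (qPoch t) :=
  antitone_nat_of_succ_le fun n => by
    rw [qPoch_succ]
    exact mul_le_of_le_one_right (qPoch_pos ht₀ ht₁ n).le (sub_le_self _ (pow_nonneg ht₀ _))

lemma qPochInf_le_qPoch (n : ℕ) : qPochInf t ≤ qPoch t n :=
  (qPoch_antitone ht₀ ht₁).le_of_tendsto
    (tendsto_qPoch_qPochInf (abs_lt.mpr ⟨by linarith, ht₁⟩)) n

lemma qPochInf_pos : 0 < qPochInf t := by
  have ht : |t| < 1 := abs_lt.mpr ⟨by linarith, ht₁⟩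
  exact (ge_of_tendsto' (tendsto_qPoch_qPochInf ht) fun n => (qPoch_pos ht₀ ht₁ n).le).lt_of_ne
    (qPochInf_ne_zero ht).symm

lemma qBinom_eq_div {n k : ℕ} (h : k ≤ n) :
    qBinom t n k = qPoch t n / (qPoch t k * qPoch t (n - k)) := by
  rw [eq_div_iff (mul_pos (qPoch_pos ht₀ ht₁ k) (qPoch_pos ht₀ ht₁ (n - k))).ne',
    ← mul_assoc, qBinom_mul_qPoch_mul_qPoch t h]

lemma qBinom_le_inv_qPochInf_sq (n k : ℕ) : qBinom t n k ≤ (qPochInf t ^ 2)⁻¹ := by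
  have hinf := qPochInf_pos ht₀ ht₁
  rcases le_or_gt k n with h | h
  · rw [qBinom_eq_div ht₀ ht₁ h, sq, ← one_div]
    exact div_le_div₀ zero_le_one (qPoch_le_one ht₀ ht₁ n) (mul_pos hinf hinf)
      (mul_le_mul (qPochInf_le_qPoch ht₀ ht₁ k) (qPochInf_le_qPoch ht₀ ht₁ _) hinf.le
        (qPoch_pos ht₀ ht₁ k).le)
  · rw [qBinom_eq_zero_of_lt t h]; positivity

lemma tendsto_qBinom_two_mul_add (k : ℤ) :
    Tendsto (fun N : ℕ => qBinom t (2 * N) (N + k).toNat) atTop (𝓝 (qPochInf t)⁻¹) := by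
  have ht : |t| < 1 := abs_lt.mpr ⟨by linarith, ht₁⟩
  have hinf := qPochInf_ne_zero ht
  have hP := tendsto_qPoch_qPochInf ht
  have hlow : Tendsto (fun N : ℕ => (N + k).toNat) atTop atTop :=
    tendsto_atTop_atTop.mpr fun b => ⟨b + k.natAbs, fun N hN => by omega⟩
  have hhigh : Tendsto (fun N : ℕ => 2 * N - (N + k).toNat) atTop atTop :=
    tendsto_atTop_atTop.mpr fun b => ⟨b + k.natAbs, fun N hN => by omega⟩
  have htwo : Tendsto (fun N : ℕ => 2 * N) atTop atTop :=
    tendsto_atTop_atTop.mpr fun b => ⟨b, fun N hN => by omega⟩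
  have hlim := (hP.comp htwo).div
    ((hP.comp hlow).mul (hP.comp hhigh)) (mul_ne_zero hinf hinf)
  rw [div_mul_cancel_left₀ hinf] at hlim
  refine hlim.congr' ?_
  filter_upwards [eventually_ge_atTop k.natAbs] with N hN
  exact (qBinom_eq_div ht₀ ht₁ (show (N + k).toNat ≤ 2 * N by omega)).symm

lemma tendsto_sum_qBinom_mul {h : ℤ → ℝ} (hh : Summable h) :
    Tendsto (fun N : ℕ => ∑ r ∈ range (2 * N + 1), qBinom t (2 * N) r * h (r - N)) atTop
      (𝓝 ((∑' k, h k) / qPochInf t)) := by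
  -- the `r`-th summand, reindexed by `k = r - N` and extended by zero to all of `ℤ`
  set F : ℕ → ℤ → ℝ :=
    fun N k => if k.natAbs ≤ N then qBinom t (2 * N) (N + k).toNat * h k else 0
  have hsum (N : ℕ) :
      ∑ r ∈ range (2 * N + 1), qBinom t (2 * N) r * h (r - N) = ∑' k, F N k := by
    rw [tsum_eq_sum (s := Icc (-N : ℤ) N) fun k hk => if_neg (by rw [mem_Icc] at hk; omega)]
    refine sum_nbij' (fun r => (r : ℤ) - N) (fun k => (N + k).toNat) ?_ ?_ ?_ ?_ ?_ <;>
      intro a ha <;> simp only [mem_range, mem_Icc] at ha ⊢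
    · omega
    · omega
    · omega
    · omega
    · simp only [if_pos (show ((a : ℤ) - N).natAbs ≤ N by omega),
        show ((N : ℤ) + (a - N)).toNat = a by omega]
  have hlim : Tendsto (fun N => ∑' k, F N k) atTop (𝓝 (∑' k, (qPochInf t)⁻¹ * h k)) := by
    refine tendsto_tsum_of_dominated_convergence (bound := fun k => (qPochInf t ^ 2)⁻¹ * |h k|)
      (hh.abs.mul_left _) (fun k => ?_) (Eventually.of_forall fun N k => ?_)
    · refine ((tendsto_qBinom_two_mul_add ht₀ ht₁ k).mul_const (h k)).congr' ?_
      filter_upwards [eventually_ge_atTop k.natAbs] with N hN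
      simp only [F, if_pos hN]
    · simp only [F]
      split_ifs
      · rw [norm_mul, Real.norm_of_nonneg (qBinom_nonneg ht₀ _ _), Real.norm_eq_abs]
        exact mul_le_mul_of_nonneg_right (qBinom_le_inv_qPochInf_sq ht₀ ht₁ _ _) (abs_nonneg _)
      · rw [norm_zero]; positivity
  rw [tsum_mul_left, ← div_eq_inv_mul] at hlim
  simpa only [hsum] using hlim

end QPochhammer

lemma summable_pow_mul_pow_sq (x : ℝ) {c : ℝ} (hc : |c| < 1) :
    Summable fun n : ℕ => x ^ n * c ^ (n ^ 2) := by
  have hsmall : ∀ᶠ n : ℕ in atTop, |x| * |c| ^ n ≤ 2⁻¹ :=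
    ((tendsto_pow_atTop_nhds_zero_of_lt_one (abs_nonneg c) hc).const_mul |x|).eventually
      (ge_mem_nhds (by rw [mul_zero]; norm_num))
  refine (summable_geometric_of_lt_one (by norm_num : (0 : ℝ) ≤ 2⁻¹) (by norm_num))
    |>.of_norm_bounded_eventually_nat ?_
  filter_upwards [hsmall] with n hn
  rw [norm_mul, norm_pow, norm_pow, Real.norm_eq_abs, Real.norm_eq_abs, sq, pow_mul, ← mul_pow]
  exact pow_le_pow_left₀ (by positivity) hn n

lemma summable_zpow_mul_zpow_sq (x : ℝ) {c : ℝ} (hc : |c| < 1) :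
    Summable fun k : ℤ => x ^ k * c ^ (k ^ 2) := by
  refine Summable.of_nat_of_neg ?_ ?_
  · simpa [← zpow_natCast] using summable_pow_mul_pow_sq x hc
  · simpa [← zpow_natCast] using summable_pow_mul_pow_sq x⁻¹ hc

lemma abs_pow_lt_one {c : ℝ} (hc : |c| < 1) {n : ℕ} (hn : n ≠ 0) : |c ^ n| < 1 := by
  rw [abs_pow]; exact pow_lt_one₀ (abs_nonneg c) hc hn

lemma summable_zpow_sq {c : ℝ} (hc : |c| < 1) : Summable fun k : ℤ => c ^ (k ^ 2) := by
  simpa using summable_zpow_mul_zpow_sq 1 hc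

lemma summable_norm_mul_pow_two_mul_add_one (x : ℝ) {c : ℝ} (hc : |c| < 1) :
    Summable fun j : ℕ => ‖x * c ^ (2 * j + 1)‖ := by
  have hc2 : |c| ^ 2 < 1 := pow_lt_one₀ (abs_nonneg c) hc two_ne_zero
  refine ((summable_geometric_of_lt_one (by positivity) hc2).mul_left (|x| * |c|)).congr
    fun j => ?_
  rw [norm_mul, norm_pow, Real.norm_eq_abs, Real.norm_eq_abs]; ring

theorem jacobi_triple_product {c x : ℝ} (hc₀ : c ≠ 0) (hc : |c| < 1) (hx : x ≠ 0) :
    HasProd (fun j : ℕ => (1 + x * c ^ (2 * j + 1)) * (1 + x⁻¹ * c ^ (2 * j + 1)))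
      ((∑' k : ℤ, x ^ k * c ^ (k ^ 2)) / qPochInf (c ^ 2)) := by
  have hmul :
      Multipliable fun j : ℕ => (1 + x * c ^ (2 * j + 1)) * (1 + x⁻¹ * c ^ (2 * j + 1)) :=
    (multipliable_one_add_of_summable (summable_norm_mul_pow_two_mul_add_one x hc)).mul
      (multipliable_one_add_of_summable (summable_norm_mul_pow_two_mul_add_one x⁻¹ hc))
  rw [hmul.hasProd_iff_tendsto_nat]
  simpa only [finite_jacobi_triple_product hc₀ hx] using
    tendsto_sum_qBinom_mul (sq_nonneg c) ((sq_lt_one_iff_abs_lt_one c).mpr hc)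
      (summable_zpow_mul_zpow_sq x hc)

lemma hasProd_one_add_pow_sq {c : ℝ} (hc₀ : c ≠ 0) (hc : |c| < 1) :
    HasProd (fun j : ℕ => (1 + c ^ (2 * j + 1)) ^ 2)
      ((∑' k : ℤ, c ^ (k ^ 2)) / qPochInf (c ^ 2)) := by
  simpa [sq] using jacobi_triple_product hc₀ hc one_ne_zero

lemma hasProd_one_sub_pow_sq {c : ℝ} (hc₀ : c ≠ 0) (hc : |c| < 1) :
    HasProd (fun j : ℕ => (1 - c ^ (2 * j + 1)) ^ 2)
      ((∑' k : ℤ, (-1) ^ k * c ^ (k ^ 2)) / qPochInf (c ^ 2)) := by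
  simpa [sq, ← sub_eq_add_neg] using jacobi_triple_product hc₀ hc (neg_ne_zero.mpr one_ne_zero)

lemma tsum_add_tsum_neg_one_zpow_mul {f : ℤ → ℝ} (hf : Summable f) :
    ∑' k, f k + ∑' k, (-1) ^ k * f k = 2 * ∑' k, f (2 * k) := by
  have hf' : Summable fun k => (-1) ^ k * f k :=
    hf.abs.of_norm_bounded fun k => by simp [norm_mul, norm_zpow]
  have hsupp : Function.support (fun k => f k + (-1) ^ k * f k) ⊆ Set.range (2 * ·) := by
    intro k hk
    rcases Int.even_or_odd k with ⟨j, rfl⟩ | hodd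
    · exact ⟨j, two_mul j⟩
    · simp [hodd.neg_one_zpow] at hk
  rw [← hf.tsum_add hf', ← (mul_right_injective₀ two_ne_zero).tsum_eq hsupp,
    ← tsum_mul_left]
  congr 1; ext j
  rw [(even_two_mul j).neg_one_zpow]; ring

lemma spOrder_eq_pow_mul_qPoch {Q : ℝ} (hQ : Q ≠ 0) (M : ℕ) :
    spOrder Q M = Q ^ (M * (2 * M + 1)) * qPoch (Q⁻¹ ^ 2) M := by
  have hfactor (i : ℕ) :
      Q ^ (2 * (i + 1)) - 1 = Q ^ (2 * i + 1 + 1) * (1 - (Q⁻¹ ^ 2) ^ (i + 1)) := by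
    rw [show 2 * i + 1 + 1 = 2 * (i + 1) by ring, inv_pow, inv_pow, ← pow_mul, mul_sub,
      mul_one, mul_inv_cancel₀ (pow_ne_zero _ hQ)]
  rw [spOrder, qPoch, prod_congr rfl fun i _ => hfactor i, prod_mul_distrib, prod_pow_eq_pow_sum,
    sum_add_distrib, sum_range_two_mul_add_one, sum_const, card_range, smul_eq_mul, mul_one,
    ← mul_assoc, ← pow_add]
  ring_nf

lemma spOrder_div_mul_div_pow_sq {Q : ℝ} (hQ : 1 < |Q|) {n r : ℕ} (hr : r ≤ n) :
    spOrder Q n / (spOrder Q r * spOrder Q (n - r)) / Q ^ (n ^ 2)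
      = qBinom (Q⁻¹ ^ 2) n r * Q⁻¹ ^ ((2 * (r : ℤ) - n) ^ 2) := by
  have hQ0 : Q ≠ 0 := abs_pos.mp (one_pos.trans hQ)
  have ht₁ : Q⁻¹ ^ 2 < 1 := by
    rw [inv_pow]; exact inv_lt_one_of_one_lt₀ ((one_lt_sq_iff_one_lt_abs Q).mpr hQ)
  obtain ⟨s, rfl⟩ := Nat.exists_eq_add_of_le hr
  have hexp : Q ^ ((r + s) * (2 * (r + s) + 1)) * Q ^ ((2 * (r : ℤ) - ↑(r + s)) ^ 2)
      = Q ^ (r * (2 * r + 1)) * Q ^ (s * (2 * s + 1)) * Q ^ ((r + s) ^ 2) := by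
    simp only [← zpow_natCast, ← zpow_add₀ hQ0]
    congr 1; push_cast; ring
  have hPr := qPoch_pos (sq_nonneg Q⁻¹) ht₁ r
  have hPs := qPoch_pos (sq_nonneg Q⁻¹) ht₁ s
  rw [spOrder_eq_pow_mul_qPoch hQ0, spOrder_eq_pow_mul_qPoch hQ0, spOrder_eq_pow_mul_qPoch hQ0,
    Nat.add_sub_cancel_left, qBinom_eq_div (sq_nonneg _) ht₁ hr, Nat.add_sub_cancel_left,
    inv_zpow', zpow_neg]
  have hz : Q ^ ((2 * (r : ℤ) - ↑(r + s)) ^ 2) ≠ 0 := zpow_ne_zero _ hQ0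
  -- opaque atoms keep `field_simp` from rewriting `Q⁻¹` inside the `qPoch` arguments
  generalize Q ^ ((2 * (r : ℤ) - ↑(r + s)) ^ 2) = z at hexp hz ⊢
  generalize qPoch (Q⁻¹ ^ 2) r = Pr at hPr ⊢
  generalize qPoch (Q⁻¹ ^ 2) s = Ps at hPs ⊢
  generalize qPoch (Q⁻¹ ^ 2) (r + s) = Pn
  field_simp
  linear_combination Pn * hexp

lemma tendsto_sum_spOrder_div_pow_sq {Q : ℝ} (hQ : 1 < |Q|) :
    Tendsto (fun m : ℕ => (∑ r ∈ range (2 * m + 1),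
        spOrder Q (2 * m) / (spOrder Q r * spOrder Q (2 * m - r))) / Q ^ ((2 * m) ^ 2))
      atTop (𝓝 ((∑' k : ℤ, Q⁻¹ ^ ((2 * k) ^ 2)) / qPochInf (Q⁻¹ ^ 2))) := by
  have hc : |Q⁻¹| < 1 := by rw [abs_inv]; exact inv_lt_one_of_one_lt₀ hQ
  have hθ : Summable fun k : ℤ => Q⁻¹ ^ ((2 * k) ^ 2) :=
    (summable_zpow_sq hc).comp_injective (mul_right_injective₀ two_ne_zero)
  refine (tendsto_sum_qBinom_mul (sq_nonneg _) ((sq_lt_one_iff_abs_lt_one _).mpr hc) hθ).congr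
    fun m => ?_
  rw [sum_div]
  refine sum_congr rfl fun r hr => ?_
  rw [spOrder_div_mul_div_pow_sq hQ (by rw [mem_range] at hr; omega)]
  push_cast; ring_nf

lemma half_mul_tprod_one_add_sq_add_tprod_one_sub_sq {c : ℝ} (hc₀ : c ≠ 0) (hc : |c| < 1) :
    (1 / 2) * ((∏' i : ℕ, (1 + c ^ (2 * i + 1)) ^ 2) + ∏' i : ℕ, (1 - c ^ (2 * i + 1)) ^ 2)
      = (∑' k : ℤ, c ^ ((2 * k) ^ 2)) / qPochInf (c ^ 2) := by
  rw [(hasProd_one_add_pow_sq hc₀ hc).tprod_eq, (hasProd_one_sub_pow_sq hc₀ hc).tprod_eq,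
    ← add_div, tsum_add_tsum_neg_one_zpow_mul (summable_zpow_sq hc)]
  ring

lemma tprod_one_add_pow_sq_mul_div {c : ℝ} (hc₀ : c ≠ 0) (hc : |c| < 1) :
    ∏' i : ℕ, ((1 + (c ^ 4) ^ (2 * i + 1)) ^ 2 * (1 - ((c ^ 4) ^ 2) ^ (i + 1))
        / (1 - (c ^ 2) ^ (i + 1)))
      = (∑' k : ℤ, c ^ ((2 * k) ^ 2)) / qPochInf (c ^ 2) := by
  have hc2 := abs_pow_lt_one hc two_ne_zero
  have hc4 := abs_pow_lt_one hc four_ne_zero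
  have hc8 := abs_pow_lt_one hc4 two_ne_zero
  rw [(((hasProd_one_add_pow_sq (pow_ne_zero 4 hc₀) hc4).mul (hasProd_qPochInf hc8)).div₀
      (hasProd_qPochInf hc2) (qPochInf_ne_zero hc2)).tprod_eq,
    div_mul_cancel₀ _ (qPochInf_ne_zero hc8)]
  congr 2 with k
  rw [← zpow_natCast, ← zpow_mul]
  ring_nf

lemma zpow_eq_inv_pow_of_eq_neg {K : Type*} [DivisionRing K] {Q : K} {e : ℤ} {n : ℕ}
    (h : e = -n) : Q ^ e = Q⁻¹ ^ n := by
  rw [h, zpow_neg, zpow_natCast, inv_pow]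

theorem involutions_Sp_odd_char_limit_general (q : ℕ) (hq : ∃ p k : ℕ, p.Prime ∧ 0 < k ∧ q = p ^ k) :
    Filter.Tendsto
      (fun m : ℕ => (∑ r ∈ Finset.range (2 * m + 1),
          spOrder q (2 * m) / (spOrder q r * spOrder q (2 * m - r))) / (q : ℝ) ^ ((2 * m) ^ 2))
      Filter.atTop
      (nhds ((1 / 2) * ((∏' i : ℕ, (1 + (q : ℝ) ^ ((1 : ℤ) - 2 * ((i : ℤ) + 1))) ^ 2)
        + ∏' i : ℕ, (1 - (q : ℝ) ^ ((1 : ℤ) - 2 * ((i : ℤ) + 1))) ^ 2))) ∧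
    (1 / 2) * ((∏' i : ℕ, (1 + (q : ℝ) ^ ((1 : ℤ) - 2 * ((i : ℤ) + 1))) ^ 2)
        + ∏' i : ℕ, (1 - (q : ℝ) ^ ((1 : ℤ) - 2 * ((i : ℤ) + 1))) ^ 2) =
      ∏' i : ℕ, ((1 + (q : ℝ) ^ ((4 : ℤ) - 8 * ((i : ℤ) + 1))) ^ 2
        * (1 - (q : ℝ) ^ (-(8 : ℤ) * ((i : ℤ) + 1)))
        / (1 - (q : ℝ) ^ (-(2 : ℤ) * ((i : ℤ) + 1)))) := by
  have hq : (1 : ℝ) < q := by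
    obtain ⟨p, k, hp, hk, rfl⟩ := hq
    exact_mod_cast Nat.one_lt_pow hk.ne' hp.one_lt
  have hQ : 1 < |(q : ℝ)| := by rwa [abs_of_pos (one_pos.trans hq)]
  set c : ℝ := (q : ℝ)⁻¹
  have hc₀ : c ≠ 0 := inv_ne_zero (one_pos.trans hq).ne'
  have hc : |c| < 1 := by rw [abs_inv]; exact inv_lt_one_of_one_lt₀ hQ
  have e₁ (i : ℕ) : (q : ℝ) ^ ((1 : ℤ) - 2 * ((i : ℤ) + 1)) = c ^ (2 * i + 1) :=
    zpow_eq_inv_pow_of_eq_neg (by push_cast; ring)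
  have e₂ (i : ℕ) : (q : ℝ) ^ ((4 : ℤ) - 8 * ((i : ℤ) + 1)) = (c ^ 4) ^ (2 * i + 1) := by
    rw [← pow_mul]; exact zpow_eq_inv_pow_of_eq_neg (by push_cast; ring)
  have e₃ (i : ℕ) : (q : ℝ) ^ (-(8 : ℤ) * ((i : ℤ) + 1)) = ((c ^ 4) ^ 2) ^ (i + 1) := by
    rw [← pow_mul, ← pow_mul]; exact zpow_eq_inv_pow_of_eq_neg (by push_cast; ring)
  have e₄ (i : ℕ) : (q : ℝ) ^ (-(2 : ℤ) * ((i : ℤ) + 1)) = (c ^ 2) ^ (i + 1) := by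
    rw [← pow_mul]; exact zpow_eq_inv_pow_of_eq_neg (by push_cast; ring)
  simp only [e₁, e₂, e₃, e₄]
  rw [half_mul_tprod_one_add_sq_add_tprod_one_sub_sq hc₀ hc,
    tprod_one_add_pow_sq_mul_div hc₀ hc]
  exact ⟨tendsto_sum_spOrder_div_pow_sq hQ, rfl⟩

/-- For fixed odd prime power `q`, the limit over even `n` of `i_Sp(2n,q)/q^{n²}`, where
`i_Sp(2n,q) = ∑_{r=0}^n |Sp(2n,q)|/(|Sp(2r,q)| |Sp(2n-2r,q)|)`, equals
`(1/2)[∏(1+q^{1-2i})² + ∏(1-q^{1-2i})²] = ∏(1+q^{4-8i})²(1-q^{-8i})/(1-q^{-2i})`. -/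
theorem involutions_Sp_odd_char_limit (q : ℕ) (hq : ∃ p k : ℕ, p.Prime ∧ 0 < k ∧ q = p ^ k)
    (hodd : Odd q) :
    Filter.Tendsto
      (fun m : ℕ => (∑ r ∈ Finset.range (2 * m + 1),
          spOrder q (2 * m) / (spOrder q r * spOrder q (2 * m - r))) / (q : ℝ) ^ ((2 * m) ^ 2))
      Filter.atTop
      (nhds ((1 / 2) * ((∏' i : ℕ, (1 + (q : ℝ) ^ ((1 : ℤ) - 2 * ((i : ℤ) + 1))) ^ 2)
        + ∏' i : ℕ, (1 - (q : ℝ) ^ ((1 : ℤ) - 2 * ((i : ℤ) + 1))) ^ 2))) ∧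
    (1 / 2) * ((∏' i : ℕ, (1 + (q : ℝ) ^ ((1 : ℤ) - 2 * ((i : ℤ) + 1))) ^ 2)
        + ∏' i : ℕ, (1 - (q : ℝ) ^ ((1 : ℤ) - 2 * ((i : ℤ) + 1))) ^ 2) =
      ∏' i : ℕ, ((1 + (q : ℝ) ^ ((4 : ℤ) - 8 * ((i : ℤ) + 1))) ^ 2
        * (1 - (q : ℝ) ^ (-(8 : ℤ) * ((i : ℤ) + 1)))
        / (1 - (q : ℝ) ^ (-(2 : ℤ) * ((i : ℤ) + 1)))) :=
  involutions_Sp_odd_char_limit_general q hq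
end
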